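/- Let P₀ = (S, A, p, r) be a finite MDP with discount γ ∈ [0,1), and let Ω_α, Ω_β be disjoint subsets of S such that every trajectory of an optimal policy of P₀ starting in Ω_α transitions to Ω_β without entering S ∖ (Ω_α ∪ Ω_β), and never leaves Ω_β once there. Let v_β* denote the optimal value function of P₀ restricted to Ω_β (equal to v₀* on Ω_β). Define the restricted MDP P_α on Ω_α (with added absorbing boundary states), where a transition from s ∈ Ω_α to s' ∈ Ω_β receives reward r(s,s',a) + γ v_β*(s'), transitions from Ω_α to states outside Ω_α ∪ Ω_β receive a large negative penalty, and boundary states are absorbing with zero reward. Then the optimal value function of P_α agrees with that of P₀ on Ω_α: v_α*(s) = v₀*(s) for all s ∈ Ω_α. -/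

import Mathlib

open Finset

/-- A finite Markov Decision Process. -/
structure MDP (S A : Type) [Fintype S] where
  act : S → Finset A
  act_nonempty : ∀ s, (act s).Nonempty
  p : S → A → S → ℝ
  p_nonneg : ∀ s a s', 0 ≤ p s a s'
  p_sum_one : ∀ s a, ∑ s', p s a s' = 1
  r : S → A → S → ℝ

variable {S A : Type} [Fintype S]

/-- State-action value of a function `v`. -/
def MDP.Q (M : MDP S A) (γ : ℝ) (v : S → ℝ) (s : S) (a : A) : ℝ :=
  ∑ s', M.p s a s' * (M.r s a s' + γ * v s')

/-- Bellman optimality operator. -/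
def MDP.T (M : MDP S A) (γ : ℝ) (v : S → ℝ) (s : S) : ℝ :=
  (M.act s).sup' (M.act_nonempty s) (M.Q γ v s)

/-- Policy evaluation operator. -/
def MDP.Tpi (M : MDP S A) (γ : ℝ) (π : S → A) (v : S → ℝ) (s : S) : ℝ :=
  M.Q γ v s (π s)

/-- `π` is a policy of `M`. -/
def MDP.IsPolicy (M : MDP S A) (π : S → A) : Prop := ∀ s, π s ∈ M.act s

/-!
The function `w` equal to `v0` on `Ωα` and to `0` elsewhere is a fixed point of the Bellman
operator of `Pα`. Outside `Ωα` the states are absorbing with zero reward, so `T w = γ w = 0`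
there. At `s ∈ Ωα`, the `Pα`-value of an action applied to `w` is its `M0`-value applied to `v0`
minus a loss on the exit transitions, which is nonnegative because the penalty exceeds `γ |v0|`
and vanishes for the optimal action `πstar`; so `T w s = T v0 s = v0 s`. The Bellman operator
is a `γ`-contraction in the sup norm, hence `vα = w`.
-/

theorem Finset.abs_sup'_sub_sup'_le {ι : Type*} {t : Finset ι} (ht : t.Nonempty) {f g : ι → ℝ}
    {c : ℝ} (h : ∀ i ∈ t, |f i - g i| ≤ c) : |t.sup' ht f - t.sup' ht g| ≤ c := by
  have sup'_le_sup'_add : ∀ f g : ι → ℝ, (∀ i ∈ t, f i - g i ≤ c) → t.sup' ht f ≤ t.sup' ht g + c :=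
    fun f g h => sup'_le _ _ fun i hi => by linarith [h i hi, le_sup' g hi]
  rw [abs_sub_le_iff]
  constructor
  · linarith [sup'_le_sup'_add f g fun i hi => (abs_sub_le_iff.1 (h i hi)).1]
  · linarith [sup'_le_sup'_add g f fun i hi => (abs_sub_le_iff.1 (h i hi)).2]

namespace MDP

theorem abs_Q_sub_Q_le (P : MDP S A) {γ : ℝ} (hγ : 0 ≤ γ) {v w : S → ℝ} {c : ℝ}
    (h : ∀ s, |v s - w s| ≤ c) (s : S) (a : A) : |P.Q γ v s a - P.Q γ w s a| ≤ γ * c := by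
  calc |P.Q γ v s a - P.Q γ w s a| = |∑ s', P.p s a s' * (γ * (v s' - w s'))| := by
        simp only [Q, ← sum_sub_distrib]
        exact congrArg _ (sum_congr rfl fun s' _ => by ring)
    _ ≤ ∑ s', |P.p s a s' * (γ * (v s' - w s'))| := abs_sum_le_sum_abs _ _
    _ ≤ ∑ s', P.p s a s' * (γ * c) := by
        gcongr with s'
        rw [abs_mul, abs_mul, abs_of_nonneg (P.p_nonneg s a s'), abs_of_nonneg hγ]
        exact mul_le_mul_of_nonneg_left (mul_le_mul_of_nonneg_left (h s') hγ) (P.p_nonneg s a s')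
    _ = γ * c := by rw [← sum_mul, P.p_sum_one, one_mul]

theorem lipschitzWith_T (P : MDP S A) {γ : ℝ} (hγ : 0 ≤ γ) :
    LipschitzWith ⟨γ, hγ⟩ (P.T γ) := by
  refine LipschitzWith.of_dist_le_mul fun v w => ?_
  refine (dist_pi_le_iff (by positivity)).2 fun s => ?_
  simp only [Real.dist_eq]
  exact abs_sup'_sub_sup'_le _ fun a _ =>
    P.abs_Q_sub_Q_le hγ (fun s' => (Real.dist_eq _ _).symm.trans_le (dist_le_pi_dist v w s')) s a

theorem contractingWith_T (P : MDP S A) {γ : ℝ} (hγ0 : 0 ≤ γ) (hγ1 : γ < 1) :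
    ContractingWith ⟨γ, hγ0⟩ (P.T γ) :=
  ⟨NNReal.coe_lt_coe.1 hγ1, P.lipschitzWith_T hγ0⟩

theorem p_eq_zero_of_p_self_eq_one (P : MDP S A) {s : S} {a : A} (h : P.p s a s = 1) {s' : S}
    (hs' : s' ≠ s) : P.p s a s' = 0 := by
  classical
  have hrest : ∑ x ∈ univ.erase s, P.p s a x = 0 := by
    linarith [add_sum_erase univ (P.p s a) (mem_univ s), P.p_sum_one s a]
  exact (sum_eq_zero_iff_of_nonneg fun x _ => P.p_nonneg s a x).1 hrest s'
    (mem_erase.2 ⟨hs', mem_univ s'⟩)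

theorem Q_of_p_self_eq_one (P : MDP S A) (γ : ℝ) (v : S → ℝ) {s : S} {a : A}
    (h : P.p s a s = 1) : P.Q γ v s a = P.r s a s + γ * v s := by
  rw [Q, sum_eq_single s (fun s' _ hs' => by rw [P.p_eq_zero_of_p_self_eq_one h hs', zero_mul])
    (fun hs => absurd (mem_univ s) hs), h, one_mul]

theorem T_eq_of_Q_eq_of_forall_Q_le (P : MDP S A) {γ c : ℝ} {v : S → ℝ} {s : S} {a : A}
    (ha : a ∈ P.act s) (heq : P.Q γ v s a = c) (hle : ∀ b ∈ P.act s, P.Q γ v s b ≤ c) :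
    P.T γ v s = c :=
  le_antisymm (sup'_le _ _ hle) (heq ▸ le_sup' _ ha)

theorem T_of_absorbing (P : MDP S A) (γ : ℝ) (v : S → ℝ) {s : S}
    (hp : ∀ a, P.p s a s = 1) (hr : ∀ a, P.r s a s = 0) : P.T γ v s = γ * v s := by
  obtain ⟨a, ha⟩ := P.act_nonempty s
  have hQ : ∀ b, P.Q γ v s b = γ * v s := fun b => by
    rw [P.Q_of_p_self_eq_one γ v (hp b), hr b, zero_add]
  exact P.T_eq_of_Q_eq_of_forall_Q_le ha (hQ a) fun b _ => (hQ b).le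

theorem mul_abs_le_of_penalty [Fintype A] [Nonempty S] [Nonempty A] (P : MDP S A) {γ M : ℝ}
    (hγ0 : 0 ≤ γ) (hγ1 : γ < 1) (v : S → ℝ)
    (hM : (univ.sup' univ_nonempty (fun x : S × A × S => |P.r x.1 x.2.1 x.2.2|) +
             γ * univ.sup' univ_nonempty (fun s => |v s|)) / (1 - γ) +
            univ.sup' univ_nonempty v - univ.inf' univ_nonempty v < M) (s : S) :
    γ * |v s| ≤ M := by
  set R := univ.sup' univ_nonempty (fun x : S × A × S => |P.r x.1 x.2.1 x.2.2|)
  set V := univ.sup' univ_nonempty (fun s => |v s|)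
  have hR : 0 ≤ R := (abs_nonneg _).trans
    (le_sup' (fun x : S × A × S => |P.r x.1 x.2.1 x.2.2|) (mem_univ (Classical.arbitrary _)))
  have hV : |v s| ≤ V := le_sup' (fun s => |v s|) (mem_univ s)
  have hinf : univ.inf' univ_nonempty v ≤ univ.sup' univ_nonempty v :=
    (inf'_le v (mem_univ s)).trans (le_sup' v (mem_univ s))
  have hdiv : γ * V ≤ (R + γ * V) / (1 - γ) := by
    rw [le_div_iff₀ (by linarith)]
    nlinarith [mul_nonneg (mul_nonneg hγ0 hγ0) ((abs_nonneg _).trans hV)]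
  nlinarith

theorem Q_restriction_indicator_eq [DecidableEq S] {M0 Pα : MDP S A} {γ M : ℝ}
    {Ωα Ωβ : Finset S} {v0 vβ : S → ℝ}
    (hp_in : ∀ s ∈ Ωα, ∀ (a : A) (s' : S), Pα.p s a s' = M0.p s a s')
    (hr_in : ∀ s ∈ Ωα, ∀ a : A, ∀ s' ∈ Ωα, Pα.r s a s' = M0.r s a s')
    (hr_toβ : ∀ s ∈ Ωα, ∀ a : A, ∀ s' ∈ Ωβ, Pα.r s a s' = M0.r s a s' + γ * vβ s')
    (hr_exit : ∀ s ∈ Ωα, ∀ a : A, ∀ s', s' ∉ Ωα → s' ∉ Ωβ → Pα.r s a s' = M0.r s a s' - M)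
    (hvβ : ∀ s ∈ Ωβ, vβ s = v0 s) {s : S} (hs : s ∈ Ωα) (a : A) :
    Pα.Q γ ((Ωα : Set S).indicator v0) s a =
      M0.Q γ v0 s a - ∑ s' ∈ (Ωα ∪ Ωβ)ᶜ, M0.p s a s' * (M + γ * v0 s') := by
  rw [Q, Q, ← univ_inter (Ωα ∪ Ωβ)ᶜ, ← sum_ite_mem, ← sum_sub_distrib]
  refine sum_congr rfl fun s' _ => ?_
  rw [hp_in s hs a s']
  by_cases hα : s' ∈ Ωα
  · simp [hα, hr_in s hs a s' hα]
  by_cases hβ : s' ∈ Ωβ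
  · simp [hα, hβ, hr_toβ s hs a s' hβ, hvβ s' hβ]
  · simp only [Set.indicator_of_notMem (mem_coe.not.2 hα), hr_exit s hs a s' hα hβ, mem_compl,
      mem_union, hα, hβ, or_self, not_false_eq_true, if_true]
    ring

end MDP

theorem restriction_value_agrees_alpha_general [Fintype A] [Nonempty S] [Nonempty A]
    (M0 : MDP S A) (γ : ℝ) (hγ0 : 0 ≤ γ) (hγ1 : γ < 1)
    (v0 : S → ℝ) (hv0 : ∀ s, v0 s = M0.T γ v0 s)
    (Ωα Ωβ : Finset S)
    -- an optimal policy of the original MDP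
    (πstar : S → A) (hπ : M0.IsPolicy πstar)
    (hopt : ∀ s, v0 s = M0.Q γ v0 s (πstar s))
    -- from Ωα it transitions to Ωβ without entering S ∖ (Ωα ∪ Ωβ)
    (hclosedα : ∀ s ∈ Ωα, ∀ s', s' ∉ Ωα → s' ∉ Ωβ → M0.p s (πstar s) s' = 0)
    -- v_β^* : the optimal value function of the subsequent region (= v0 on Ωβ)
    (vβstar : S → ℝ) (hvβstar : ∀ s ∈ Ωβ, vβstar s = v0 s)
    -- a sufficiently large penalty
    (M : ℝ)
    (hM : (univ.sup' univ_nonempty (fun x : S × A × S => |M0.r x.1 x.2.1 x.2.2|) +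
             γ * univ.sup' univ_nonempty (fun s => |v0 s|)) / (1 - γ) +
            univ.sup' univ_nonempty v0 - univ.inf' univ_nonempty v0 < M)
    -- the restricted MDP Pα
    (Pα : MDP S A)
    (hact : ∀ s, Pα.act s = M0.act s)
    (hp_in : ∀ s ∈ Ωα, ∀ (a : A) (s' : S), Pα.p s a s' = M0.p s a s')
    (hp_abs : ∀ s ∉ Ωα, ∀ a : A, Pα.p s a s = 1)
    (hr_in : ∀ s ∈ Ωα, ∀ a : A, ∀ s' ∈ Ωα, Pα.r s a s' = M0.r s a s')
    (hr_toβ : ∀ s ∈ Ωα, ∀ a : A, ∀ s' ∈ Ωβ, Pα.r s a s' = M0.r s a s' + γ * vβstar s')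
    (hr_exit : ∀ s ∈ Ωα, ∀ a : A, ∀ s', s' ∉ Ωα → s' ∉ Ωβ → Pα.r s a s' = M0.r s a s' - M)
    (hr_abs : ∀ s ∉ Ωα, ∀ (a : A) (s' : S), Pα.r s a s' = 0)
    (vα : S → ℝ) (hvα : ∀ s, vα s = Pα.T γ vα s) :
    ∀ s ∈ Ωα, vα s = v0 s := by
  classical
  have hw : Function.IsFixedPt (Pα.T γ) ((Ωα : Set S).indicator v0) := by
    funext s
    by_cases hs : s ∈ Ωα
    · have hQ := MDP.Q_restriction_indicator_eq (M := M) hp_in hr_in hr_toβ hr_exit hvβstar hs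
      have hloss : ∀ a, 0 ≤ ∑ s' ∈ (Ωα ∪ Ωβ)ᶜ, M0.p s a s' * (M + γ * v0 s') := fun a =>
        sum_nonneg fun s' _ => mul_nonneg (M0.p_nonneg s a s') <| by
          nlinarith [M0.mul_abs_le_of_penalty hγ0 hγ1 v0 hM s', neg_abs_le (v0 s')]
      have hnoloss : ∑ s' ∈ (Ωα ∪ Ωβ)ᶜ, M0.p s (πstar s) s' * (M + γ * v0 s') = 0 :=
        sum_eq_zero fun s' hs' => by
          simp only [mem_compl, mem_union, not_or] at hs'
          rw [hclosedα s hs s' hs'.1 hs'.2, zero_mul]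
      rw [Set.indicator_of_mem (mem_coe.2 hs)]
      refine Pα.T_eq_of_Q_eq_of_forall_Q_le (hact s ▸ hπ s) ?_ fun a ha => ?_
      · rw [hQ, hnoloss, sub_zero, hopt s]
      · rw [hQ, hv0 s]
        exact (sub_le_self _ (hloss a)).trans (le_sup' _ (hact s ▸ ha))
    · rw [Pα.T_of_absorbing γ _ (hp_abs s hs) (fun a => hr_abs s hs a s),
        Set.indicator_of_notMem (mem_coe.not.2 hs), mul_zero]
  have hvα_eq : vα = (Ωα : Set S).indicator v0 :=
    (Pα.contractingWith_T hγ0 hγ1).fixedPoint_unique' (funext fun s => (hvα s).symm) hw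
  intro s hs
  rw [hvα_eq, Set.indicator_of_mem (mem_coe.2 hs)]

/-- restricting an MDP to `Ωα` and rewarding transitions into `Ωβ`
with the (discounted) optimal value of the subsequent region yields the optimal
value function of the original MDP on `Ωα`. -/
theorem restriction_value_agrees_alpha [Fintype A] [Nonempty S] [Nonempty A]
    (M0 : MDP S A) (γ : ℝ) (hγ0 : 0 ≤ γ) (hγ1 : γ < 1)
    (v0 : S → ℝ) (hv0 : ∀ s, v0 s = M0.T γ v0 s)
    (Ωα Ωβ : Finset S) (hdisj : Disjoint Ωα Ωβ)
    -- an optimal policy of the original MDP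
    (πstar : S → A) (hπ : M0.IsPolicy πstar)
    (hopt : ∀ s, v0 s = M0.Q γ v0 s (πstar s))
    -- once in Ωβ it never leaves Ωβ
    (hclosedβ : ∀ s ∈ Ωβ, ∀ s' ∉ Ωβ, M0.p s (πstar s) s' = 0)
    -- from Ωα it transitions to Ωβ without entering S ∖ (Ωα ∪ Ωβ)
    (hclosedα : ∀ s ∈ Ωα, ∀ s', s' ∉ Ωα → s' ∉ Ωβ → M0.p s (πstar s) s' = 0)
    -- from every state of Ωα some policy achieves this
    (hstay : ∃ σ : S → A, M0.IsPolicy σ ∧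
      ∀ s ∈ Ωα, ∀ s', s' ∉ Ωα → s' ∉ Ωβ → M0.p s (σ s) s' = 0)
    -- v_β^* : the optimal value function of the subsequent region (= v0 on Ωβ)
    (vβstar : S → ℝ) (hvβstar : ∀ s ∈ Ωβ, vβstar s = v0 s)
    -- a sufficiently large penalty
    (M : ℝ)
    (hM : (univ.sup' univ_nonempty (fun x : S × A × S => |M0.r x.1 x.2.1 x.2.2|) +
             γ * univ.sup' univ_nonempty (fun s => |v0 s|)) / (1 - γ) +
            univ.sup' univ_nonempty v0 - univ.inf' univ_nonempty v0 < M)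
    -- the restricted MDP Pα
    (Pα : MDP S A)
    (hact : ∀ s, Pα.act s = M0.act s)
    (hp_in : ∀ s ∈ Ωα, ∀ (a : A) (s' : S), Pα.p s a s' = M0.p s a s')
    (hp_abs : ∀ s ∉ Ωα, ∀ a : A, Pα.p s a s = 1)
    (hr_in : ∀ s ∈ Ωα, ∀ a : A, ∀ s' ∈ Ωα, Pα.r s a s' = M0.r s a s')
    (hr_toβ : ∀ s ∈ Ωα, ∀ a : A, ∀ s' ∈ Ωβ, Pα.r s a s' = M0.r s a s' + γ * vβstar s')
    (hr_exit : ∀ s ∈ Ωα, ∀ a : A, ∀ s', s' ∉ Ωα → s' ∉ Ωβ → Pα.r s a s' = M0.r s a s' - M)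
    (hr_abs : ∀ s ∉ Ωα, ∀ (a : A) (s' : S), Pα.r s a s' = 0)
    (vα : S → ℝ) (hvα : ∀ s, vα s = Pα.T γ vα s) :
    ∀ s ∈ Ωα, vα s = v0 s :=
  restriction_value_agrees_alpha_general M0 γ hγ0 hγ1 v0 hv0 Ωα Ωβ πstar hπ hopt hclosedα vβstar
    hvβstar M hM Pα hact hp_in hp_abs hr_in hr_toβ hr_exit hr_abs vα hvα
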